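/- arXiv:2009.06755 — 2 statements merged into one kernel-verified Lean document; each statement's English description precedes it below -/
import Mathlib

section
/- For z ∈ [0,1), arctan(√((1+z)/(1−z))) has antiderivative (1/2)·√(1−z²) + z·arctan(√((1+z)/(1−z))); that is, the derivative of F(z) = (1/2)√(1−z²) + z·arctan(√((1+z)/(1−z))) equals arctan(√((1+z)/(1−z))) on (0,1). -/
theorem hasDerivAt_antideriv_arctan_sqrt (z : ℝ) (hz : z ∈ Set.Ioo (0:ℝ) 1) :
    HasDerivAt
      (fun x : ℝ => (1 / 2) * Real.sqrt (1 - x ^ 2)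
         + x * Real.arctan (Real.sqrt ((1 + x) / (1 - x))))
      (Real.arctan (Real.sqrt ((1 + z) / (1 - z)))) z := by
  obtain ⟨hz0, hz1⟩ := hz
  have h1z : (0:ℝ) < 1 - z := by linarith
  have h1z' : (0:ℝ) < 1 + z := by linarith
  have hzz : (0:ℝ) < 1 - z ^ 2 := by nlinarith
  have hu0 : (0:ℝ) < (1 + z) / (1 - z) := div_pos h1z' h1z
  set s := Real.sqrt (1 - z ^ 2) with hs
  set t := Real.sqrt ((1 + z) / (1 - z)) with ht
  have hs0 : 0 < s := Real.sqrt_pos.2 hzz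
  have ht0 : 0 < t := Real.sqrt_pos.2 hu0
  have hs2 : s ^ 2 = 1 - z ^ 2 := Real.sq_sqrt hzz.le
  have ht2 : t ^ 2 = (1 + z) / (1 - z) := Real.sq_sqrt hu0.le
  -- derivative of sqrt (1 - x^2)
  have d1 : HasDerivAt (fun x : ℝ => Real.sqrt (1 - x ^ 2)) (-(2 * z) / (2 * s)) z := by
    have : HasDerivAt (fun x : ℝ => 1 - x ^ 2) (-(2 * z)) z := by
      simpa using ((hasDerivAt_pow 2 z).const_sub 1)
    exact this.sqrt hzz.ne'
  -- derivative of (1+x)/(1-x)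
  have d2 : HasDerivAt (fun x : ℝ => (1 + x) / (1 - x))
      ((1 * (1 - z) - (1 + z) * (-1)) / (1 - z) ^ 2) z := by
    exact ((hasDerivAt_id z).const_add 1).div ((hasDerivAt_id z).const_sub 1) h1z.ne'
  -- derivative of arctan (sqrt ((1+x)/(1-x)))
  have d3 : HasDerivAt (fun x : ℝ => Real.arctan (Real.sqrt ((1 + x) / (1 - x))))
      (1 / (1 + t ^ 2) * (((1 * (1 - z) - (1 + z) * (-1)) / (1 - z) ^ 2) / (2 * t))) z := by
    exact (d2.sqrt hu0.ne').arctan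
  -- combine
  have d4 : HasDerivAt
      (fun x : ℝ => (1 / 2) * Real.sqrt (1 - x ^ 2)
         + x * Real.arctan (Real.sqrt ((1 + x) / (1 - x))))
      ((1 / 2) * (-(2 * z) / (2 * s))
        + (1 * Real.arctan t
           + z * (1 / (1 + t ^ 2) * (((1 * (1 - z) - (1 + z) * (-1)) / (1 - z) ^ 2) / (2 * t))))) z :=
    (d1.const_mul (1 / 2)).add ((hasDerivAt_id z).mul d3)
  convert d4 using 1
  have hts : t * (1 - z) = s := by
    have h : (t * (1 - z)) ^ 2 = s ^ 2 := by
      rw [mul_pow, ht2, hs2]; field_simp; ring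
    have hnn : 0 ≤ t * (1 - z) := by positivity
    calc t * (1 - z) = Real.sqrt ((t * (1 - z)) ^ 2) := (Real.sqrt_sq hnn).symm
      _ = Real.sqrt (s ^ 2) := by rw [h]
      _ = s := Real.sqrt_sq hs0.le
  have h1t : 1 + t ^ 2 = 2 / (1 - z) := by
    rw [ht2]; field_simp; ring
  rw [h1t]
  field_simp
  nlinarith [hts, hs0, ht0]
end

section
/- Define P_sphere(ℓ) = 1 − (2/π)∫₀¹ arcsin(tan(ℓz/r)·cot(ℓ/r)) dz for fixed r > 0 and small ℓ > 0. Then lim_{ℓ→0⁺} P_sphere(ℓ) = 2/π. -/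
open Real Filter MeasureTheory intervalIntegral Set

/-- The key inequalities: for `0 < x < π/2` and `0 ≤ z ≤ 1`,
`z * cos x ≤ tan (x*z) * cot x ≤ z / cos x`. -/
lemma sphere_aux_bounds {x z : ℝ} (hx : 0 < x) (hx2 : x < π / 2)
    (hz0 : 0 ≤ z) (hz1 : z ≤ 1) :
    z * Real.cos x ≤ Real.tan (x * z) * Real.cot x ∧
      Real.tan (x * z) * Real.cot x ≤ z / Real.cos x := by
  have hxpi : x < π := lt_trans hx2 (by linarith [Real.pi_pos])
  have hsx : 0 < Real.sin x := Real.sin_pos_of_pos_of_lt_pi hx hxpi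
  have hcx : 0 < Real.cos x := Real.cos_pos_of_mem_Ioo ⟨by linarith, hx2⟩
  have hxz0 : 0 ≤ x * z := mul_nonneg hx.le hz0
  have hxzx : x * z ≤ x := by nlinarith
  have hcxz : Real.cos x ≤ Real.cos (x * z) :=
    Real.cos_le_cos_of_nonneg_of_le_pi hxz0 hxpi.le hxzx
  have hcxz0 : 0 < Real.cos (x * z) := lt_of_lt_of_le hcx hcxz
  have hsinle : Real.sin (x * z) ≤ x * z := Real.sin_le hxz0
  have htanxz : x * z ≤ Real.tan (x * z) := by
    rcases eq_or_lt_of_le hxz0 with h | h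
    · simp [← h]
    · exact (Real.lt_tan h (lt_of_le_of_lt hxzx hx2)).le
  have hsinxle : Real.sin x ≤ x := Real.sin_le hx.le
  have htanx : x < Real.tan x := Real.lt_tan hx hx2
  have hxcos : x * Real.cos x < Real.sin x := by
    have := htanx
    rw [Real.tan_eq_sin_div_cos, lt_div_iff₀ hcx] at this
    linarith
  rw [Real.cot_eq_cos_div_sin]
  constructor
  · -- lower bound: tan(xz) * (cos x / sin x) ≥ xz * cos x / x = z cos x
    have h1 : x * z * (Real.cos x / Real.sin x) ≤
        Real.tan (x * z) * (Real.cos x / Real.sin x) := by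
      apply mul_le_mul_of_nonneg_right htanxz (by positivity)
    have h2 : z * Real.cos x ≤ x * z * (Real.cos x / Real.sin x) := by
      rw [mul_div_assoc', le_div_iff₀ hsx]
      nlinarith [mul_le_mul_of_nonneg_left hsinxle (mul_nonneg hz0 hcx.le)]
    linarith
  · -- upper bound
    rw [Real.tan_eq_sin_div_cos, div_mul_div_comm, div_le_div_iff₀ (by positivity) hcx]
    have key : Real.cos x * (x * Real.cos x) ≤ Real.cos (x * z) * Real.sin x :=
      mul_le_mul hcxz hxcos.le (by positivity) hcxz0.le
    nlinarith [mul_le_mul_of_nonneg_left key hz0,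
      mul_le_mul_of_nonneg_left hsinle (mul_nonneg hcx.le hcx.le)]

lemma sphere_integral_arcsin : ∫ z in (0:ℝ)..1, Real.arcsin z = π / 2 - 1 := by
  have h : ∀ z ∈ Set.Ioo (0:ℝ) 1,
      HasDerivWithinAt (fun z : ℝ => z * Real.arcsin z + Real.sqrt (1 - z ^ 2))
        (Real.arcsin z) (Set.Ioi z) z := by
    intro z hz
    have hz1 : z ≠ 1 := ne_of_lt hz.2
    have hzm1 : z ≠ -1 := by intro h; rw [h] at hz; linarith [hz.1]
    have hpos : 0 < 1 - z ^ 2 := by nlinarith [hz.1, hz.2]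
    have hs : Real.sqrt (1 - z ^ 2) ≠ 0 := by positivity
    have d1 : HasDerivAt (fun z : ℝ => z * Real.arcsin z)
        (1 * Real.arcsin z + z * (1 / Real.sqrt (1 - z ^ 2))) z :=
      (hasDerivAt_id z).mul (Real.hasDerivAt_arcsin hzm1 hz1)
    have d2 : HasDerivAt (fun z : ℝ => Real.sqrt (1 - z ^ 2))
        (1 / (2 * Real.sqrt (1 - z ^ 2)) * (0 - 2 * z)) z := by
      exact (Real.hasDerivAt_sqrt (ne_of_gt hpos)).comp z
        (((hasDerivAt_const z (1:ℝ)).sub ((hasDerivAt_pow 2 z)))) |>.congr_deriv (by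
          ring_nf)
    have := d1.add d2
    have heq : 1 * Real.arcsin z + z * (1 / Real.sqrt (1 - z ^ 2)) +
        1 / (2 * Real.sqrt (1 - z ^ 2)) * (0 - 2 * z) = Real.arcsin z := by
      field_simp
      ring
    rw [heq] at this
    exact this.hasDerivWithinAt
  have hcont : ContinuousOn (fun z : ℝ => z * Real.arcsin z + Real.sqrt (1 - z ^ 2))
      (Set.Icc 0 1) :=
    ((continuous_id.mul Real.continuous_arcsin).add
      (Real.continuous_sqrt.comp (by continuity))).continuousOn
  have hint : IntervalIntegrable Real.arcsin volume 0 1 :=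
    Real.continuous_arcsin.intervalIntegrable 0 1
  have := intervalIntegral.integral_eq_sub_of_hasDeriv_right_of_le (by norm_num)
    hcont h hint
  rw [this]
  simp [Real.arcsin_one]

theorem sphere_prob_limit (r : ℝ) (hr : 0 < r) :
    Filter.Tendsto
      (fun ℓ : ℝ =>
        1 - (2 / Real.pi)
          * ∫ z in (0:ℝ)..1, Real.arcsin (Real.tan (ℓ * z / r) * Real.cot (ℓ / r)))
      (nhdsWithin 0 (Set.Ioi 0)) (nhds (2 / Real.pi)) := by
  have hIoc : Set.uIoc (0:ℝ) 1 = Set.Ioc 0 1 := Set.uIoc_of_le (by norm_num)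
  have hsmall : ∀ᶠ ℓ in nhdsWithin (0:ℝ) (Set.Ioi 0),
      0 < ℓ ∧ ℓ / r < π / 2 := by
    have h1 : ∀ᶠ ℓ in nhdsWithin (0:ℝ) (Set.Ioi 0), ℓ ∈ Set.Ioi (0:ℝ) :=
      eventually_mem_nhdsWithin
    have h2 : ∀ᶠ ℓ in nhds (0:ℝ), ℓ < r * (π / 2) :=
      Filter.Tendsto.eventually_lt_const (by positivity) tendsto_id
    filter_upwards [h1, nhdsWithin_le_nhds h2] with ℓ hℓ1 hℓ2
    exact ⟨hℓ1, (div_lt_iff₀ hr).mpr (by linarith [hℓ2])⟩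
  -- Step 1: the integral tends to π/2 - 1
  have hI : Filter.Tendsto
      (fun ℓ : ℝ => ∫ z in (0:ℝ)..1,
        Real.arcsin (Real.tan (ℓ * z / r) * Real.cot (ℓ / r)))
      (nhdsWithin 0 (Set.Ioi 0)) (nhds (π / 2 - 1)) := by
    rw [← sphere_integral_arcsin]
    apply intervalIntegral.tendsto_integral_filter_of_dominated_convergence
      (fun _ => π / 2)
    · filter_upwards with ℓ
      apply Measurable.aestronglyMeasurable
      simp only [Real.tan_eq_sin_div_cos]
      apply Real.measurable_arcsin.comp
      exact ((Real.measurable_sin.div Real.measurable_cos).comp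
        ((measurable_id.const_mul ℓ).div_const r)).mul measurable_const
    · filter_upwards with ℓ
      filter_upwards with z _
      rw [Real.norm_eq_abs, abs_le]
      exact ⟨Real.neg_pi_div_two_le_arcsin _, Real.arcsin_le_pi_div_two _⟩
    · exact intervalIntegrable_const
    · filter_upwards with z hz
      rw [hIoc] at hz
      -- squeeze
      have hlow : Filter.Tendsto (fun ℓ : ℝ => Real.arcsin (z * Real.cos (ℓ / r)))
          (nhdsWithin 0 (Set.Ioi 0)) (nhds (Real.arcsin z)) := by
        have : Continuous fun ℓ : ℝ => Real.arcsin (z * Real.cos (ℓ / r)) := by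
          continuity
        have ht := this.tendsto 0
        simp only [zero_div, Real.cos_zero, mul_one] at ht
        exact ht.mono_left nhdsWithin_le_nhds
      have hhigh : Filter.Tendsto (fun ℓ : ℝ => Real.arcsin (z / Real.cos (ℓ / r)))
          (nhdsWithin 0 (Set.Ioi 0)) (nhds (Real.arcsin z)) := by
        have hc : ContinuousAt (fun ℓ : ℝ => Real.arcsin (z / Real.cos (ℓ / r))) 0 := by
          apply Real.continuous_arcsin.continuousAt.comp
          apply ContinuousAt.div continuousAt_const
          · exact (Real.continuous_cos.comp (continuous_id.div_const r)).continuousAt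
          · simp
        have ht := hc.tendsto
        simp only [zero_div, Real.cos_zero, div_one] at ht
        exact ht.mono_left nhdsWithin_le_nhds
      apply tendsto_of_tendsto_of_tendsto_of_le_of_le' hlow hhigh
      · filter_upwards [hsmall] with ℓ ⟨hℓ0, hℓ2⟩
        have hb := sphere_aux_bounds (div_pos hℓ0 hr) hℓ2 hz.1.le hz.2
        have : ℓ / r * z = ℓ * z / r := by ring
        rw [this] at hb
        exact Real.monotone_arcsin hb.1
      · filter_upwards [hsmall] with ℓ ⟨hℓ0, hℓ2⟩
        have hb := sphere_aux_bounds (div_pos hℓ0 hr) hℓ2 hz.1.le hz.2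
        have heq : ℓ / r * z = ℓ * z / r := by ring
        rw [heq] at hb
        exact Real.monotone_arcsin hb.2
  -- Step 2: algebra
  have h2 : Filter.Tendsto
      (fun ℓ : ℝ =>
        1 - (2 / Real.pi)
          * ∫ z in (0:ℝ)..1, Real.arcsin (Real.tan (ℓ * z / r) * Real.cot (ℓ / r)))
      (nhdsWithin 0 (Set.Ioi 0)) (nhds (1 - 2 / π * (π / 2 - 1))) :=
    (hI.const_mul (2 / π)).const_sub 1
  convert h2 using 2
  have hπ : (π : ℝ) ≠ 0 := Real.pi_ne_zero
  field_simp
  ring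
end
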